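/- Let A be an invertible n×n matrix over a field and B = A⁻¹. Then the r×r submatrix of B with rows {1,…,r} and columns {n−r+1,…,n} satisfies: det(A) times its determinant equals (−1)^{r(n+1)} times the determinant of the (n−r)×(n−r) submatrix of A with rows {1,…,n−r} and columns {r+1,…,n}. -/

import Mathlib

/-!
Split `Fin n` as `Fin r ⊕ Fin (n - r)` in two ways: `f` (the first `r` indices, then the rest) and
`e` (the last `r` indices, then the first `n - r`). Then the minor of `B` is the top-left block of
`B.submatrix f e` and the minor of `A` is the bottom-right block of its inverse `A.submatrix e f`.
For block matrices with `N * M = 1`, multiplying `M` on the left by `[N₁₁ N₁₂; 0 1]` gives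
`[1 0; M₂₁ M₂₂]`, so `det M * det N₁₁ = det M₂₂`. Finally `e` and `f` differ by the `r`-th power
of the cyclic rotation of `Fin n`, whose sign `(-1) ^ ((n - 1) * r)` is `(-1) ^ (r * (n + 1))`.
-/

open Matrix Equiv

namespace Matrix

variable {R : Type*} [CommRing R] {α β : Type*} [Fintype α] [Fintype β] [DecidableEq α]
  [DecidableEq β]

theorem det_mul_det_toBlocks₁₁_of_mul_eq_one {M N : Matrix (α ⊕ β) (α ⊕ β) R} (h : N * M = 1) :
    M.det * N.toBlocks₁₁.det = M.toBlocks₂₂.det := by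
  have hprod : fromBlocks N.toBlocks₁₁ N.toBlocks₁₂ 0 1 * M =
      fromBlocks 1 0 M.toBlocks₂₁ M.toBlocks₂₂ := by
    ext (i | i) j
    · have hij := congr_fun₂ h (.inl i) j
      rcases j with j | j <;>
        simpa [mul_apply, Fintype.sum_sum_type, one_apply, toBlocks₁₁, toBlocks₁₂] using hij
    · rcases j with j | j <;>
        simp [mul_apply, Fintype.sum_sum_type, one_apply, toBlocks₂₁, toBlocks₂₂]
  simpa [det_fromBlocks_zero₂₁, det_fromBlocks_zero₁₂, mul_comm] using congrArg det hprod

theorem det_mul_det_submatrix_of_mul_eq_one {ι : Type*} [Fintype ι] [DecidableEq ι]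
    {A B : Matrix ι ι R} (h : B * A = 1) (e f : α ⊕ β ≃ ι) :
    A.det * (B.submatrix (f ∘ Sum.inl) (e ∘ Sum.inl)).det =
      Perm.sign (e.symm.trans f) * (A.submatrix (e ∘ Sum.inr) (f ∘ Sum.inr)).det := by
  set s : R := ((Perm.sign (e.symm.trans f) : ℤ) : R)
  have hs : s * s = 1 := by
    rw [← Int.cast_mul, ← Units.val_mul, Int.units_mul_self, Units.val_one, Int.cast_one]
  have hdet : (A.submatrix e f).det = s * A.det := by
    rw [← det_permute', ← det_submatrix_equiv_self e]
    congr 1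
    ext i j
    simp
  have hblock : s * A.det * (B.submatrix (f ∘ Sum.inl) (e ∘ Sum.inl)).det =
      (A.submatrix (e ∘ Sum.inr) (f ∘ Sum.inr)).det := by
    rw [← hdet]
    exact det_mul_det_toBlocks₁₁_of_mul_eq_one (M := A.submatrix e f) (N := B.submatrix f e)
      (by rw [submatrix_mul_equiv, h, submatrix_one_equiv])
  linear_combination s * hblock - A.det * (B.submatrix (f ∘ Sum.inl) (e ∘ Sum.inl)).det * hs

end Matrix

theorem coe_finRotate_pow_apply {n : ℕ} (k : ℕ) (x : Fin n) :
    ((finRotate n ^ k) x : ℕ) = (x + k) % n := by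
  have := x.neZero
  induction k with
  | zero => simp [Nat.mod_eq_of_lt x.isLt]
  | succ k ih =>
    rw [pow_succ', Perm.mul_apply, finRotate_apply, Fin.val_add, ih, Fin.val_one',
      ← Nat.add_mod, add_assoc]

theorem sign_finRotate_pow_of_le {n r : ℕ} (hr : r ≤ n) :
    Perm.sign (finRotate n ^ r) = (-1) ^ (r * (n + 1)) := by
  rw [map_pow, sign_finRotate, ← pow_mul]
  cases n with
  | zero => simp [Nat.le_zero.mp hr]
  | succ m =>
    rw [Nat.add_sub_cancel, show r * (m + 1 + 1) = m * r + 2 * r by ring, pow_add,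
      (even_two_mul r).neg_one_pow, mul_one]

/-- Jacobi identity, stated for `B = A⁻¹`. -/
theorem jacobi_minor_inverse {k : Type*} [Field k] {n r : ℕ} (hr : r ≤ n)
    (A B : Matrix (Fin n) (Fin n) k) (hA : IsUnit A.det) (hB : B = A⁻¹) :
    A.det * (B.submatrix
        (fun i : Fin r => (⟨(i : ℕ), by have := i.isLt; omega⟩ : Fin n))
        (fun j : Fin r => (⟨n - r + (j : ℕ), by have := j.isLt; omega⟩ : Fin n))).det =
    (-1 : k) ^ (r * (n + 1)) *
      (A.submatrix
        (fun i : Fin (n - r) => (⟨(i : ℕ), by have := i.isLt; omega⟩ : Fin n))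
        (fun j : Fin (n - r) => (⟨r + (j : ℕ), by have := j.isLt; omega⟩ : Fin n))).det := by
  subst hB
  let f : Fin r ⊕ Fin (n - r) ≃ Fin n := finSumFinEquiv.trans (finCongr (by omega))
  let e : Fin r ⊕ Fin (n - r) ≃ Fin n :=
    (sumComm _ _).trans (finSumFinEquiv.trans (finCongr (by omega)))
  have hrot : e.trans (finRotate n ^ r) = f := by
    ext (i | j) <;> simp [e, f, coe_finRotate_pow_apply]
    · rw [show n - r + i + r = n + i by omega, Nat.add_mod_left, Nat.mod_eq_of_lt (by omega)]
    · rw [Nat.mod_eq_of_lt (by omega), add_comm]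
  have hsign : ((Perm.sign (e.symm.trans f) : ℤ) : k) = (-1) ^ (r * (n + 1)) := by
    rw [← hrot, ← trans_assoc, symm_trans_self, refl_trans]
    simp [sign_finRotate_pow_of_le hr]
  rw [← hsign]
  exact det_mul_det_submatrix_of_mul_eq_one (nonsing_inv_mul A hA) e f
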